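/- Let k ≥ 2 be an even integer and ε > 0. Define v ∈ ℝ^k by v_j = 1 for j ≤ k/2 and v_j = e^ε for j > k/2, and w ∈ ℝ^k by w_j = e^ε for j ≤ k/2 and w_j = 1 for j > k/2. Then (1/(1+e^ε)) · [ k·(∑_{j=1}^k v_j y_j)²/(∑_{j=1}^k v_j) + k·(∑_{j=1}^k w_j y_j)²/(∑_{j=1}^k w_j) ] = (2/π)·((e^ε−1)/(e^ε+1))². -/

import Mathlib

open Real Finset

/-- The standard normal density `φ(u) = (2π)^{-1/2} exp(-u²/2)`. -/
noncomputable def stdGaussianPDF (u : ℝ) : ℝ :=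
  (Real.sqrt (2 * Real.pi))⁻¹ * Real.exp (-u ^ 2 / 2)

/-- The standard normal cumulative distribution function. -/
noncomputable def stdGaussianCDF (x : ℝ) : ℝ :=
  ∫ t in Set.Iic x, stdGaussianPDF t

open MeasureTheory Set in
open MeasureTheory Set in
lemma stdGaussianPDF_eq (u : ℝ) :
    stdGaussianPDF u = (Real.sqrt (2 * π))⁻¹ * Real.exp (-(1/2) * u ^ 2) := by
  unfold stdGaussianPDF; congr 1; ring

open MeasureTheory Set in
lemma stdGaussianPDF_pos (u : ℝ) : 0 < stdGaussianPDF u := by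
  unfold stdGaussianPDF
  have : (0:ℝ) < Real.sqrt (2 * π) := Real.sqrt_pos.mpr (by positivity)
  positivity

open MeasureTheory Set in
lemma integrable_stdGaussianPDF : Integrable stdGaussianPDF := by
  have h := (integrable_exp_neg_mul_sq (by norm_num : (0:ℝ) < 1/2)).const_mul
    (Real.sqrt (2 * π))⁻¹
  exact h.congr (Filter.Eventually.of_forall fun u => (stdGaussianPDF_eq u).symm)

open MeasureTheory Set in
lemma integral_stdGaussianPDF : ∫ u, stdGaussianPDF u = 1 := by
  simp_rw [stdGaussianPDF_eq]
  rw [MeasureTheory.integral_const_mul, integral_gaussian,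
    show π / (1/2) = 2 * π by ring,
    inv_mul_cancel₀ (Real.sqrt_ne_zero'.mpr (by positivity))]

open MeasureTheory Set in
lemma stdGaussianCDF_zero : stdGaussianCDF 0 = 1/2 := by
  have heven : ∀ u, stdGaussianPDF (-u) = stdGaussianPDF u := fun u => by
    unfold stdGaussianPDF; congr 1; ring
  have h1 : (∫ t in Set.Iic (0:ℝ), stdGaussianPDF t)
      = ∫ t in Set.Ioi (0:ℝ), stdGaussianPDF t := by
    have := integral_comp_neg_Iic (0:ℝ) stdGaussianPDF
    simp only [heven, neg_zero] at this
    exact this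
  have h2 := intervalIntegral.integral_Iic_add_Ioi (b := (0:ℝ))
    integrable_stdGaussianPDF.integrableOn integrable_stdGaussianPDF.integrableOn
  rw [integral_stdGaussianPDF] at h2
  unfold stdGaussianCDF
  linarith

open MeasureTheory Set in
lemma stdGaussianCDF_strictMono : StrictMono stdGaussianCDF := by
  intro a b hab
  have h : stdGaussianCDF b - stdGaussianCDF a = ∫ t in a..b, stdGaussianPDF t :=
    intervalIntegral.integral_Iic_sub_Iic integrable_stdGaussianPDF.integrableOn
      integrable_stdGaussianPDF.integrableOn
  have hpos : 0 < ∫ t in a..b, stdGaussianPDF t := by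
    apply intervalIntegral.intervalIntegral_pos_of_pos_on
    · exact integrable_stdGaussianPDF.intervalIntegrable
    · intro u _; exact stdGaussianPDF_pos u
    · exact hab
  linarith

/-- the sign mechanism's Fisher information value
`(2/π)((e^ε−1)/(e^ε+1))²` is attained by a feasible point of the discrete
problem at every even quantization level `k`. -/
theorem sign_mechanism_value_attained
    (k : ℕ) (hk2 : 2 ≤ k) (hke : Even k)
    (ε : ℝ) (hε0 : 0 < ε)
    (x y : ℕ → ℝ)
    (hx : ∀ j, 1 ≤ j → j ≤ k - 1 → stdGaussianCDF (x j) = (j : ℝ) / (k : ℝ))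
    (hy : ∀ j, 1 ≤ j → j ≤ k →
      y j = (if j = 1 then 0 else stdGaussianPDF (x (j - 1)))
            - (if j = k then 0 else stdGaussianPDF (x j)))
    (v w : ℕ → ℝ)
    (hv : ∀ j, 1 ≤ j → j ≤ k → v j = if j ≤ k / 2 then 1 else Real.exp ε)
    (hw : ∀ j, 1 ≤ j → j ≤ k → w j = if j ≤ k / 2 then Real.exp ε else 1) :
    (1 / (1 + Real.exp ε)) *
      ((k : ℝ) * (∑ j ∈ Finset.Icc 1 k, v j * y j) ^ 2 / (∑ j ∈ Finset.Icc 1 k, v j)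
       + (k : ℝ) * (∑ j ∈ Finset.Icc 1 k, w j * y j) ^ 2 / (∑ j ∈ Finset.Icc 1 k, w j))
      = (2 / Real.pi) * ((Real.exp ε - 1) / (Real.exp ε + 1)) ^ 2 := by
  obtain ⟨m, hm⟩ := hke
  have hkm : k = 2 * m := by omega
  have hm1 : 1 ≤ m := by omega
  set E := Real.exp ε with hE
  have hE0 : 0 < E := Real.exp_pos ε
  -- the telescoping function
  set G : ℕ → ℝ := fun j => if 1 ≤ j ∧ j ≤ k - 1 then stdGaussianPDF (x j) else 0 with hG
  have hG0 : G 0 = 0 := by simp [hG]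
  have hGk : G k = 0 := by
    simp only [hG]; rw [if_neg (by omega)]
  have hGm : G m = stdGaussianPDF (x m) := by
    simp only [hG]; rw [if_pos (by omega)]
  have hyG : ∀ j, 1 ≤ j → j ≤ k → y j = G (j - 1) - G j := by
    intro j h1 h2
    rw [hy j h1 h2]
    congr 1
    · by_cases hj : j = 1
      · subst hj; simp [hG]
      · simp only [hG]; rw [if_neg hj, if_pos (by omega)]
    · by_cases hj : j = k
      · rw [if_pos hj]; simp only [hG]; rw [if_neg (by omega)]
      · simp only [hG]; rw [if_neg hj, if_pos (by omega)]
  -- telescoping sums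
  have tele : ∀ a b : ℕ, a ≤ b → b ≤ k → (∑ j ∈ Finset.Ioc a b, y j) = G a - G b := by
    intro a b
    induction b with
    | zero => intro h1 _; simp [Nat.le_zero.mp h1]
    | succ n ih =>
      intro h1 h2
      by_cases han : a ≤ n
      · rw [Finset.sum_Ioc_succ_top han, ih han (by omega), hyG (n+1) (by omega) h2]
        simp only [Nat.add_sub_cancel]
        ring
      · have : a = n + 1 := by omega
        subst this; simp
  -- midpoint value
  have hm0 : (m:ℝ) ≠ 0 := Nat.cast_ne_zero.mpr (by omega)
  have hcdf : stdGaussianCDF (x m) = 1 / 2 := by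
    rw [hx m hm1 (by omega), hkm]
    push_cast
    field_simp
  have hxm0 : x m = 0 := stdGaussianCDF_strictMono.injective
    (by rw [hcdf, stdGaussianCDF_zero])
  have hp : stdGaussianPDF (x m) = (Real.sqrt (2 * Real.pi))⁻¹ := by
    rw [hxm0]; unfold stdGaussianPDF; norm_num
  set p : ℝ := (Real.sqrt (2 * Real.pi))⁻¹ with hpdef
  have hp2 : p ^ 2 = (2 * Real.pi)⁻¹ := by
    rw [hpdef, inv_pow, Real.sq_sqrt (by positivity)]
  have hA : (∑ j ∈ Finset.Ioc 0 m, y j) = -p := by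
    rw [tele 0 m (by omega) (by omega), hG0, hGm, hp]; ring
  have hB : (∑ j ∈ Finset.Ioc m k, y j) = p := by
    rw [tele m k (by omega) le_rfl, hGk, hGm, hp]; ring
  -- splitting sums
  have hsplit : ∀ f : ℕ → ℝ, (∑ j ∈ Finset.Icc 1 k, f j)
      = (∑ j ∈ Finset.Ioc 0 m, f j) + ∑ j ∈ Finset.Ioc m k, f j := by
    intro f
    rw [show Finset.Icc 1 k = Finset.Ioc 0 k by ext j; simp only [Finset.mem_Icc, Finset.mem_Ioc]; omega]
    exact (Finset.sum_Ioc_consecutive f (Nat.zero_le m) (by omega)).symm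
  have hSv : (∑ j ∈ Finset.Icc 1 k, v j * y j) = (E - 1) * p := by
    rw [hsplit (fun j => v j * y j)]
    have e1 : (∑ j ∈ Finset.Ioc 0 m, v j * y j) = ∑ j ∈ Finset.Ioc 0 m, y j :=
      Finset.sum_congr rfl fun j hj => by
        rw [Finset.mem_Ioc] at hj
        rw [hv j (by omega) (by omega), if_pos (by omega), one_mul]
    have e2 : (∑ j ∈ Finset.Ioc m k, v j * y j) = E * ∑ j ∈ Finset.Ioc m k, y j := by
      rw [Finset.mul_sum]
      exact Finset.sum_congr rfl fun j hj => by
        rw [Finset.mem_Ioc] at hj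
        rw [hv j (by omega) (by omega), if_neg (by omega)]
    rw [e1, e2, hA, hB]; ring
  have hSw : (∑ j ∈ Finset.Icc 1 k, w j * y j) = (1 - E) * p := by
    rw [hsplit (fun j => w j * y j)]
    have e1 : (∑ j ∈ Finset.Ioc 0 m, w j * y j) = E * ∑ j ∈ Finset.Ioc 0 m, y j := by
      rw [Finset.mul_sum]
      exact Finset.sum_congr rfl fun j hj => by
        rw [Finset.mem_Ioc] at hj
        rw [hw j (by omega) (by omega), if_pos (by omega)]
    have e2 : (∑ j ∈ Finset.Ioc m k, w j * y j) = ∑ j ∈ Finset.Ioc m k, y j :=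
      Finset.sum_congr rfl fun j hj => by
        rw [Finset.mem_Ioc] at hj
        rw [hw j (by omega) (by omega), if_neg (by omega), one_mul]
    rw [e1, e2, hA, hB]; ring
  have hcv : (∑ j ∈ Finset.Icc 1 k, v j) = m * (1 + E) := by
    rw [hsplit v]
    have e1 : (∑ j ∈ Finset.Ioc 0 m, v j) = ∑ _j ∈ Finset.Ioc 0 m, (1:ℝ) :=
      Finset.sum_congr rfl fun j hj => by
        rw [Finset.mem_Ioc] at hj
        rw [hv j (by omega) (by omega), if_pos (by omega)]
    have e2 : (∑ j ∈ Finset.Ioc m k, v j) = ∑ _j ∈ Finset.Ioc m k, E :=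
      Finset.sum_congr rfl fun j hj => by
        rw [Finset.mem_Ioc] at hj
        rw [hv j (by omega) (by omega), if_neg (by omega)]
    rw [e1, e2, Finset.sum_const, Finset.sum_const, Nat.card_Ioc, Nat.card_Ioc,
      Nat.sub_zero, show k - m = m from by omega, nsmul_eq_mul, nsmul_eq_mul]
    ring
  have hcw : (∑ j ∈ Finset.Icc 1 k, w j) = m * (1 + E) := by
    rw [hsplit w]
    have e1 : (∑ j ∈ Finset.Ioc 0 m, w j) = ∑ _j ∈ Finset.Ioc 0 m, E :=
      Finset.sum_congr rfl fun j hj => by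
        rw [Finset.mem_Ioc] at hj
        rw [hw j (by omega) (by omega), if_pos (by omega)]
    have e2 : (∑ j ∈ Finset.Ioc m k, w j) = ∑ _j ∈ Finset.Ioc m k, (1:ℝ) :=
      Finset.sum_congr rfl fun j hj => by
        rw [Finset.mem_Ioc] at hj
        rw [hw j (by omega) (by omega), if_neg (by omega)]
    rw [e1, e2, Finset.sum_const, Finset.sum_const, Nat.card_Ioc, Nat.card_Ioc,
      Nat.sub_zero, show k - m = m from by omega, nsmul_eq_mul, nsmul_eq_mul]
    ring
  have hkcast : (k:ℝ) = 2 * m := by rw [hkm]; push_cast; ring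
  rw [hSv, hSw, hcv, hcw, hkcast]
  have h1 : ((E - 1) * p) ^ 2 = (E - 1) ^ 2 * (2 * Real.pi)⁻¹ := by rw [← hp2]; ring
  have h2 : ((1 - E) * p) ^ 2 = (E - 1) ^ 2 * (2 * Real.pi)⁻¹ := by rw [← hp2]; ring
  rw [h1, h2]
  have hπ : Real.pi ≠ 0 := Real.pi_ne_zero
  have h1E : (1 + E) ≠ 0 := by positivity
  have hE1 : E + 1 ≠ 0 := by positivity
  field_simp
  ring
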